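/- Reduction of the EC condition for Harten entropies under constant velocity and constant h'(s)ρ/p: let γ > 1 and let h : ℝ → ℝ be twice differentiable with h' > 0. For any pair of states u₋ = (ρ₋, v, p₋), u₊ = (ρ₊, v, p₊) with common velocity v and with h'(s₋) ρ₋ / p₋ = h'(s₊) ρ₊ / p₊ (where s_± = log(p_±/ρ_±^γ)), and for any vector F = (a, b, c) ∈ ℝ³, one has ⟦w_h⟧ · F − ⟦ψ_h⟧ = −⟦h(s) − γ h'(s)⟧ a − (γ−1) v ⟦h'(s) ρ⟧. -/
import Mathlib


noncomputable section
open Real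

/-- A state `u = (ρ, v, p)` of the 1D compressible Euler equations:
density `u.1`, velocity `u.2.1`, pressure `u.2.2`. -/
abbrev EulerState := ℝ × ℝ × ℝ

/-- Euclidean dot product on `ℝ × ℝ × ℝ`. -/
def dot3 (a b : EulerState) : ℝ := a.1*b.1 + a.2.1*b.2.1 + a.2.2*b.2.2

/-- Entropy variables `w_h(u)` for the Harten entropy `U_h = -ρ h(s)`, `s = log(p/ρ^γ)`. -/
def entVarH (γ : ℝ) (h : ℝ → ℝ) (u : EulerState) : EulerState :=
  ((γ-1) * deriv h (Real.log (u.2.2 / u.1 ^ γ)) / u.2.2 *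
      (-(u.1 * u.2.1^2)/2
        - (u.2.2/(γ-1)) * (h (Real.log (u.2.2 / u.1 ^ γ))
            / deriv h (Real.log (u.2.2 / u.1 ^ γ)) - γ)),
   (γ-1) * deriv h (Real.log (u.2.2 / u.1 ^ γ)) / u.2.2 * (u.1 * u.2.1),
   (γ-1) * deriv h (Real.log (u.2.2 / u.1 ^ γ)) / u.2.2 * (-u.1))

/-- Flux potential `ψ_h(u) = (γ-1) h'(s) ρ v` of the Harten entropy pair. -/
def fluxPotH (γ : ℝ) (h : ℝ → ℝ) (u : EulerState) : ℝ :=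
  (γ-1) * deriv h (Real.log (u.2.2 / u.1 ^ γ)) * u.1 * u.2.1

lemma harten_aux (γ : ℝ) (hγ1 : γ - 1 ≠ 0)
    (v ρm ρp pm pp Dm Dp Hm Hp : ℝ)
    (hρm : ρm ≠ 0) (hρp : ρp ≠ 0) (hpm : pm ≠ 0) (hpp : pp ≠ 0)
    (hDm : Dm ≠ 0) (hDp : Dp ≠ 0)
    (hconst : Dm * ρm / pm = Dp * ρp / pp)
    (a b c : ℝ) :
    ((γ-1) * Dp / pp * (-(ρp * v^2)/2 - (pp/(γ-1)) * (Hp/Dp - γ))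
      - (γ-1) * Dm / pm * (-(ρm * v^2)/2 - (pm/(γ-1)) * (Hm/Dm - γ))) * a
    + ((γ-1) * Dp / pp * (ρp * v) - (γ-1) * Dm / pm * (ρm * v)) * b
    + ((γ-1) * Dp / pp * (-ρp) - (γ-1) * Dm / pm * (-ρm)) * c
    - ((γ-1) * Dp * ρp * v - (γ-1) * Dm * ρm * v)
    = -((Hp - γ * Dp) - (Hm - γ * Dm)) * a - (γ-1) * v * (Dp * ρp - Dm * ρm) := by
  have hDp' : Dp = Dm * ρm * pp / (pm * ρp) := by
    field_simp at hconst ⊢; linarith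
  subst hDp'
  field_simp
  ring

/-- reduction of the EC condition for Harten entropies under
constant velocity and constant `h'(s) ρ / p`: for any pair of such states and any
vector `F = (a, b, c)`,
`⟦w_h⟧ ⬝ F - ⟦ψ_h⟧ = -⟦h(s) - γ h'(s)⟧ a - (γ-1) v ⟦h'(s) ρ⟧`. -/
theorem harten_ec_condition_reduction
    (γ : ℝ) (hγ : 1 < γ) (h : ℝ → ℝ)
    (hdiff : Differentiable ℝ h) (hdiff2 : Differentiable ℝ (deriv h))
    (hpos : ∀ s, 0 < deriv h s)
    (v ρm ρp pm pp : ℝ)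
    (hρm : 0 < ρm) (hρp : 0 < ρp) (hpm : 0 < pm) (hpp : 0 < pp)
    (sm sp : ℝ) (hsm : sm = Real.log (pm / ρm ^ γ)) (hsp : sp = Real.log (pp / ρp ^ γ))
    (hconst : deriv h sm * ρm / pm = deriv h sp * ρp / pp)
    (a b c : ℝ) :
    dot3 (entVarH γ h (ρp, v, pp) - entVarH γ h (ρm, v, pm)) (a, b, c)
        - (fluxPotH γ h (ρp, v, pp) - fluxPotH γ h (ρm, v, pm))
      = -((h sp - γ * deriv h sp) - (h sm - γ * deriv h sm)) * a
        - (γ-1) * v * (deriv h sp * ρp - deriv h sm * ρm) := by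
  have hγ1 : γ - 1 ≠ 0 := by linarith
  have key := harten_aux γ hγ1 v ρm ρp pm pp (deriv h sm) (deriv h sp)
    (h sm) (h sp) hρm.ne' hρp.ne' hpm.ne' hpp.ne'
    (hpos sm).ne' (hpos sp).ne' hconst a b c
  simp only [dot3, entVarH, fluxPotH, Prod.fst_sub, Prod.snd_sub, ← hsm, ← hsp]
  linear_combination key
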